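/- arXiv:2409.03331 — 3 statements merged into one kernel-verified Lean document; each statement's English description precedes it below -/
import Mathlib

section
/- Let f be a real-valued C² function on [0,1] such that |f′(x)| ≥ A and |f″(x)| ≤ B for all x ∈ [0,1], where A > 0. Then |∫₀¹ e^{2πi f(x)} dx| ≤ 1/A + B/A². -/
/-!
Integrate by parts against the non-vanishing phase: with `h = e(f) / (2πi f')` one has
`h' = e(f) - e(f) f'' / (2πi f'²)`, so `∫₀¹ e(f)` equals `h 1 - h 0` up to the integral of the
remainder, which has size at most `B / (2πA²)`, while `|h| ≤ 1 / (2πA)`. The remainder is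
controlled by the mean value inequality applied to `h - ∫₀ˣ e(f)` rather than by integrating it.
-/

open intervalIntegral Complex Real Set Topology FourierTransform

section PrimitiveApproximation

variable {E : Type*} [NormedAddCommGroup E] [NormedSpace ℝ E] [CompleteSpace E]
  {g h r : ℝ → E} {a b C x : ℝ}

theorem hasDerivWithinAt_Ici_integral_of_continuousOn (hg : ContinuousOn g (Icc a b))
    (hx : x ∈ Ico a b) : HasDerivWithinAt (fun u => ∫ t in a..u, g t) (g x) (Ici x) x := by
  have hIcc : Icc a b ∈ 𝓝[>] x := Icc_mem_nhdsGT_of_mem hx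
  refine integral_hasDerivWithinAt_right (t := Ioi x) ?_ ?_ ?_
  · exact (hg.mono (uIcc_subset_Icc (left_mem_Icc.2 (hx.1.trans hx.2.le))
      (Ico_subset_Icc_self hx))).intervalIntegrable
  · exact (hg.stronglyMeasurableAtFilter_nhdsWithin measurableSet_Icc x).filter_mono
      (nhdsWithin_le_of_mem hIcc)
  · exact (hg x (Ico_subset_Icc_self hx)).mono_of_mem_nhdsWithin hIcc

theorem norm_sub_sub_integral_le_of_hasDerivWithinAt (hab : a ≤ b)
    (hg : ContinuousOn g (Icc a b))
    (hh : ∀ x ∈ Icc a b, HasDerivWithinAt h (g x - r x) (Icc a b) x)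
    (hr : ∀ x ∈ Ico a b, ‖r x‖ ≤ C) :
    ‖h b - h a - ∫ x in a..b, g x‖ ≤ C * (b - a) := by
  set φ : ℝ → E := fun u => h u - ∫ t in a..u, g t
  have hφ_cont : ContinuousOn φ (Icc a b) := by
    refine ContinuousOn.sub (fun x hx => (hh x hx).continuousWithinAt) ?_
    simpa only [uIcc_of_le hab] using
      continuousOn_primitive_interval (hg.integrableOn_Icc.mono_set (uIcc_of_le hab).le)
  have hφ_deriv : ∀ x ∈ Ico a b, HasDerivWithinAt φ (-r x) (Ici x) x := fun x hx => by
    simpa using! ((hh x (Ico_subset_Icc_self hx)).mono_of_mem_nhdsWithin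
      (Icc_mem_nhdsGE_of_mem hx)).sub (hasDerivWithinAt_Ici_integral_of_continuousOn hg hx)
  have := norm_image_sub_le_of_norm_deriv_right_le_segment hφ_cont hφ_deriv
    (fun x hx => (norm_neg (r x)).trans_le (hr x hx)) b (right_mem_Icc.2 hab)
  rwa [show φ b - φ a = h b - h a - ∫ x in a..b, g x by simp [φ]; abel] at this

end PrimitiveApproximation

section FourierChar

variable {f f' : ℝ → ℝ} {f'' : ℝ} {s : Set ℝ} {x : ℝ}

theorem HasDerivWithinAt.fourierChar_comp {d : ℝ} (hf : HasDerivWithinAt f d s x) :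
    HasDerivWithinAt (fun y => (𝐞 (f y) : ℂ)) (2 * π * I * d * 𝐞 (f x)) s x :=
  ((hasDerivAt_fourierChar (f x)).scomp_hasDerivWithinAt x hf).congr_deriv <| by
    rw [real_smul]; ring

theorem HasDerivWithinAt.fourierChar_comp_div_deriv (hf : HasDerivWithinAt f (f' x) s x)
    (hf' : HasDerivWithinAt f' f'' s x) (hx : f' x ≠ 0) :
    HasDerivWithinAt (fun y => (𝐞 (f y) : ℂ) / (2 * π * I * f' y))
      (𝐞 (f x) - 𝐞 (f x) * f'' / (2 * π * I * f' x ^ 2)) s x := by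
  have hden := hf'.ofReal_comp.const_mul (2 * π * I)
  refine (hf.fourierChar_comp.div hden (by simp [hx, pi_ne_zero])).congr_deriv ?_
  have : (f' x : ℂ) ≠ 0 := by exact_mod_cast hx
  field_simp

theorem norm_two_pi_I_mul (z : ℂ) : ‖2 * π * I * z‖ = 2 * π * ‖z‖ := by
  simp [abs_of_pos pi_pos]

variable {A B d e t : ℝ}

theorem norm_fourierChar_div_two_pi_I_mul_le (hA : 0 < A) (hd : A ≤ |d|) :
    ‖(𝐞 t : ℂ) / (2 * π * I * d)‖ ≤ 1 / (2 * π * A) := by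
  rw [norm_div, norm_two_pi_I_mul, Circle.norm_coe, norm_real, Real.norm_eq_abs]
  gcongr

theorem norm_fourierChar_mul_div_two_pi_I_mul_sq_le (hA : 0 < A) (hd : A ≤ |d|) (he : |e| ≤ B) :
    ‖(𝐞 t : ℂ) * e / (2 * π * I * d ^ 2)‖ ≤ B / (2 * π * A ^ 2) := by
  rw [norm_div, norm_two_pi_I_mul, norm_mul, Circle.norm_coe, one_mul, norm_pow, norm_real,
    norm_real, Real.norm_eq_abs, Real.norm_eq_abs]
  have hB : 0 ≤ B := (abs_nonneg e).trans he
  gcongr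

end FourierChar

theorem one_div_two_pi_mul_add_le {A B : ℝ} (hA : 0 < A) (hB : 0 ≤ B) :
    1 / (2 * π * A) + 1 / (2 * π * A) + B / (2 * π * A ^ 2) ≤ 1 / A + B / A ^ 2 := by
  have hπ : 1 ≤ π := by linarith [pi_gt_three]
  calc _ = π⁻¹ * (1 / A) + (2 * π)⁻¹ * (B / A ^ 2) := by field_simp; ring
    _ ≤ 1 * (1 / A) + 1 * (B / A ^ 2) := by
      gcongr <;> apply inv_le_one_of_one_le₀ <;> linarith
    _ = 1 / A + B / A ^ 2 := by ring

theorem van_der_corput_nonstationary_general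
    (f f' f'' : ℝ → ℝ) (A B : ℝ) (hA : 0 < A)
    (hf' : ∀ x ∈ Set.Icc (0:ℝ) 1, HasDerivWithinAt f (f' x) (Set.Icc 0 1) x)
    (hf'' : ∀ x ∈ Set.Icc (0:ℝ) 1, HasDerivWithinAt f' (f'' x) (Set.Icc 0 1) x)
    (hlb : ∀ x ∈ Set.Icc (0:ℝ) 1, A ≤ |f' x|)
    (hub : ∀ x ∈ Set.Icc (0:ℝ) 1, |f'' x| ≤ B) :
    ‖∫ x in (0:ℝ)..1,
        Complex.exp ((((2 * Real.pi * f x) : ℝ) : ℂ) * Complex.I)‖ ≤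
      1 / A + B / A ^ 2 := by
  simp only [← fourierChar_apply]
  set h : ℝ → ℂ := fun y => 𝐞 (f y) / (2 * π * I * f' y)
  set I₀ := ∫ x in (0:ℝ)..1, (𝐞 (f x) : ℂ)
  have h_bound (x) (hx : x ∈ Icc (0:ℝ) 1) : ‖h x‖ ≤ 1 / (2 * π * A) :=
    norm_fourierChar_div_two_pi_I_mul_le hA (hlb x hx)
  have remainder : ‖h 1 - h 0 - I₀‖ ≤ B / (2 * π * A ^ 2) * (1 - 0) :=
    norm_sub_sub_integral_le_of_hasDerivWithinAt zero_le_one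
      (fun x hx => (hf' x hx).fourierChar_comp.continuousWithinAt)
      (fun x hx => (hf' x hx).fourierChar_comp_div_deriv (hf'' x hx)
        (abs_pos.1 (hA.trans_le (hlb x hx))))
      (fun x hx => norm_fourierChar_mul_div_two_pi_I_mul_sq_le hA
        (hlb x (Ico_subset_Icc_self hx)) (hub x (Ico_subset_Icc_self hx)))
  have h_triangle : ‖I₀‖ ≤ ‖h 1‖ + ‖h 0‖ + ‖h 1 - h 0 - I₀‖ := by
    have := norm_sub_le (h 1 - h 0) (h 1 - h 0 - I₀)
    rw [sub_sub_cancel] at this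
    linarith [norm_sub_le (h 1) (h 0)]
  have hB : 0 ≤ B := (abs_nonneg _).trans (hub 0 (left_mem_Icc.2 zero_le_one))
  linarith [h_bound 1 (right_mem_Icc.2 zero_le_one), h_bound 0 (left_mem_Icc.2 zero_le_one),
    one_div_two_pi_mul_add_le hA hB]

/-- Van der Corput-type inequality (Kaufman): if `f` is C² on [0,1] with
`|f'| ≥ A` and `|f''| ≤ B`, then `|∫₀¹ e(f(x)) dx| ≤ 1/A + B/A²`. -/
theorem van_der_corput_nonstationary
    (f f' f'' : ℝ → ℝ) (A B : ℝ) (hA : 0 < A)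
    (hf' : ∀ x ∈ Set.Icc (0:ℝ) 1, HasDerivWithinAt f (f' x) (Set.Icc 0 1) x)
    (hf'' : ∀ x ∈ Set.Icc (0:ℝ) 1, HasDerivWithinAt f' (f'' x) (Set.Icc 0 1) x)
    (hcont : ContinuousOn f'' (Set.Icc (0:ℝ) 1))
    (hlb : ∀ x ∈ Set.Icc (0:ℝ) 1, A ≤ |f' x|)
    (hub : ∀ x ∈ Set.Icc (0:ℝ) 1, |f'' x| ≤ B) :
    ‖∫ x in (0:ℝ)..1,
        Complex.exp ((((2 * Real.pi * f x) : ℝ) : ℂ) * Complex.I)‖ ≤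
      1 / A + B / A ^ 2 :=
  van_der_corput_nonstationary_general f f' f'' A B hA hf' hf'' hlb hub
end

section
/- Let f be a real-valued C² function on [0,1] such that f′(x) = (C₁x + C₂)·g(x) for constants C₁ > 0, C₂ ∈ ℝ and a C¹ function g on [0,1] satisfying |g(x)| ≥ A and |g′(x)| ≤ B for all x ∈ [0,1], with B ≥ A > 0. Then |∫₀¹ e^{2πi f(x)} dx| ≤ 6B/(A^{3/2}·C₁^{1/2}). -/
/-!
Split `[0, 1]` at the stationary point `x₀ = -C₂ / C₁` of `f` into `|x - x₀| < δ`, where the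
integrand is bounded by `1`, and at most two intervals on which `|f'| ≥ C₁ A δ`. On those,
integration by parts against `e(f) / (2πi f')` bounds the integral by the boundary values of
`1 / |f'|` plus `∫ |f''| / f'^2`, and `f''/f'^2 = 1 / (C₁ (x - x₀)^2 g) + g' / (C₁ (x - x₀) g^2)`.
The choice `δ = B / (A^{3/2} C₁^{1/2})` makes each of these pieces at most `2δ`.
-/

open MeasureTheory intervalIntegral Set Real
open scoped FourierTransform

theorem norm_integral_fourierChar_le {f φ ψ : ℝ → ℝ} {a b : ℝ} (hab : a ≤ b)
    (hf : ∀ x ∈ Icc a b, HasDerivWithinAt f (φ x) (Icc a b) x)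
    (hφ : ∀ x ∈ Icc a b, HasDerivWithinAt φ (ψ x) (Icc a b) x)
    (hψ : ContinuousOn ψ (Icc a b)) (hφ₀ : ∀ x ∈ Icc a b, φ x ≠ 0) :
    ‖∫ x in a..b, (𝐞 (f x) : ℂ)‖ ≤
      (|φ a|⁻¹ + |φ b|⁻¹ + ∫ x in a..b, |ψ x| / φ x ^ 2) / (2 * π) := by
  set F : ℝ → ℂ := fun x => 𝐞 (f x) / (2 * π * Complex.I * φ x)
  set r : ℝ → ℂ := fun x => 𝐞 (f x) * ((ψ x / φ x ^ 2 : ℝ) : ℂ) / (2 * π * Complex.I)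
  have hF : ∀ x ∈ Icc a b, HasDerivWithinAt F (𝐞 (f x) - r x) (Icc a b) x := by
    intro x hx
    have he := (hasDerivAt_fourierChar (f x)).scomp_hasDerivWithinAt x (hf x hx)
    have hD := ((hφ x hx).ofReal_comp).const_mul (2 * π * Complex.I)
    have hφx : (φ x : ℂ) ≠ 0 := mod_cast hφ₀ x hx
    have h0 : (2 * π * Complex.I * φ x : ℂ) ≠ 0 := by simp [pi_ne_zero, hφx]
    refine (he.div hD h0).congr_deriv ?_
    simp only [r, Function.comp_apply, Complex.real_smul]
    push_cast
    field_simp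
  have hfc : ContinuousOn f (Icc a b) := fun x hx => (hf x hx).continuousWithinAt
  have hφc : ContinuousOn φ (Icc a b) := fun x hx => (hφ x hx).continuousWithinAt
  have hcont : ContinuousOn (fun x => (𝐞 (f x) : ℂ)) (Icc a b) := by fun_prop
  have hint : IntervalIntegrable (fun x => (𝐞 (f x) : ℂ)) volume a b :=
    hcont.intervalIntegrable_of_Icc hab
  have hrint : IntervalIntegrable r volume a b := by
    refine ContinuousOn.intervalIntegrable_of_Icc hab <|
      (hcont.mul (Complex.continuous_ofReal.comp_continuousOn ?_)).div_const _
    exact hψ.div (hφc.pow 2) fun x hx => pow_ne_zero 2 (hφ₀ x hx)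
  have hFTC : ∫ x in a..b, (𝐞 (f x) - r x) = F b - F a :=
    integral_eq_sub_of_hasDerivAt_of_le hab (fun x hx => (hF x hx).continuousWithinAt)
      (fun x hx => (hF x (Ioo_subset_Icc_self hx)).hasDerivAt (Icc_mem_nhds hx.1 hx.2))
      (hint.sub hrint)
  have hnormF : ∀ x, ‖F x‖ = |φ x|⁻¹ / (2 * π) := fun x => by
    simp [F, Circle.norm_coe, abs_of_pos pi_pos, div_eq_inv_mul, mul_comm]
  have hnormr : ∀ x, ‖r x‖ = |ψ x| / φ x ^ 2 / (2 * π) := fun x => by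
    simp [r, Circle.norm_coe, abs_of_pos pi_pos]
  calc ‖∫ x in a..b, (𝐞 (f x) : ℂ)‖ = ‖F b - F a + ∫ x in a..b, r x‖ := by
        rw [← hFTC, integral_sub hint hrint, sub_add_cancel]
    _ ≤ ‖F a‖ + ‖F b‖ + ∫ x in a..b, ‖r x‖ := by
        grw [norm_add_le, norm_sub_le, intervalIntegral.norm_integral_le_integral_norm hab,
          add_comm ‖F b‖]
    _ = _ := by simp only [hnormF, hnormr, intervalIntegral.integral_div]; ring

theorem abs_div_sq_le_of_abs_le {C A B δ t u v : ℝ} (hC : 0 < C) (hA : 0 < A) (hδ : 0 < δ)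
    (ht : δ ≤ |t|) (hu : A ≤ |u|) (hv : |v| ≤ B) :
    |C * u + C * t * v| / (C * t * u) ^ 2 ≤ (C * A)⁻¹ * (t ^ 2)⁻¹ + B / (C * A ^ 2 * δ) := by
  have htpos : 0 < |t| := hδ.trans_le ht
  have hupos : 0 < |u| := hA.trans_le hu
  have hB : 0 ≤ B := (abs_nonneg v).trans hv
  calc |C * u + C * t * v| / (C * t * u) ^ 2
      ≤ (C * |u| + C * |t| * B) / (C * |t| * |u|) ^ 2 := by
        have hden : (C * t * u) ^ 2 = (C * |t| * |u|) ^ 2 := by simp only [mul_pow, sq_abs]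
        rw [hden]
        gcongr
        calc |C * u + C * t * v| ≤ |C * u| + |C * t * v| := abs_add_le _ _
          _ = C * |u| + C * |t| * |v| := by simp only [abs_mul, abs_of_pos hC]
          _ ≤ C * |u| + C * |t| * B := by gcongr
    _ = (C * |u|)⁻¹ * (t ^ 2)⁻¹ + B / (C * |u| ^ 2 * |t|) := by
        rw [← sq_abs t]; field_simp
    _ ≤ (C * A)⁻¹ * (t ^ 2)⁻¹ + B / (C * A ^ 2 * δ) := by gcongr

theorem integral_inv_sub_sq_le {a b x₀ δ : ℝ} (hab : a ≤ b) (hδ : 0 < δ)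
    (hfar : ∀ x ∈ Icc a b, δ ≤ |x - x₀|) :
    ∫ x in a..b, ((x - x₀) ^ 2)⁻¹ ≤ δ⁻¹ := by
  have hne : ∀ x ∈ uIcc a b, x - x₀ ≠ 0 := fun x hx =>
    abs_pos.1 (hδ.trans_le (hfar x (uIcc_of_le hab ▸ hx)))
  have hderiv : ∀ x ∈ uIcc a b, HasDerivAt (fun y => -(y - x₀)⁻¹) ((x - x₀) ^ 2)⁻¹ x := by
    intro x hx
    exact (((hasDerivAt_id x).sub_const x₀).inv (hne x hx)).neg.congr_deriv (by simp [neg_div])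
  have hint : IntervalIntegrable (fun x => ((x - x₀) ^ 2)⁻¹) volume a b :=
    (ContinuousOn.inv₀ (by fun_prop) fun x hx => pow_ne_zero 2 (hne x hx)).intervalIntegrable
  rw [integral_eq_sub_of_hasDerivAt hderiv hint, neg_sub_neg]
  rcases lt_or_ge x₀ a with hx₀a | hax₀
  · have ha : δ ≤ a - x₀ := by simpa [abs_of_pos (sub_pos.2 hx₀a)] using hfar a ⟨le_rfl, hab⟩
    have hb : 0 < (b - x₀)⁻¹ := inv_pos.2 (by linarith)
    have := inv_anti₀ hδ ha
    linarith
  rcases lt_or_ge b x₀ with hbx₀ | hx₀b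
  · have hb : δ ≤ x₀ - b := by simpa [abs_of_neg (sub_neg.2 hbx₀)] using hfar b ⟨hab, le_rfl⟩
    have ha : (a - x₀)⁻¹ < 0 := inv_lt_zero.2 (by linarith)
    have := inv_anti₀ hδ hb
    have hb' : (b - x₀)⁻¹ = -(x₀ - b)⁻¹ := by rw [← inv_neg, neg_sub]
    linarith
  · have := hfar x₀ ⟨hax₀, hx₀b⟩
    rw [sub_self, abs_zero] at this
    linarith

theorem norm_integral_fourierChar_le_of_far {f g g' : ℝ → ℝ} {A B C x₀ δ a b : ℝ}
    (hA : 0 < A) (hC : 0 < C) (hδ : 0 < δ) (hab : a ≤ b)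
    (hf : ∀ x ∈ Icc a b, HasDerivWithinAt f (C * (x - x₀) * g x) (Icc a b) x)
    (hg : ∀ x ∈ Icc a b, HasDerivWithinAt g (g' x) (Icc a b) x)
    (hg' : ContinuousOn g' (Icc a b))
    (hlb : ∀ x ∈ Icc a b, A ≤ |g x|) (hub : ∀ x ∈ Icc a b, |g' x| ≤ B)
    (hfar : ∀ x ∈ Ioo a b, δ ≤ |x - x₀|) :
    ‖∫ x in a..b, (𝐞 (f x) : ℂ)‖ ≤
      (3 / (C * A * δ) + B * (b - a) / (C * A ^ 2 * δ)) / (2 * π) := by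
  rcases hab.eq_or_lt with rfl | hab'
  · have hB : 0 ≤ B := (abs_nonneg _).trans (hub a ⟨le_rfl, le_rfl⟩)
    rw [integral_same, norm_zero]
    positivity
  have hfar' : ∀ x ∈ Icc a b, δ ≤ |x - x₀| := by
    rw [← closure_Ioo hab'.ne]
    exact closure_minimal hfar <|
      isClosed_le continuous_const (by fun_prop : Continuous fun x : ℝ => |x - x₀|)
  have hφ : ∀ x ∈ Icc a b, C * A * δ ≤ |C * (x - x₀) * g x| := fun x hx => by
    rw [abs_mul, abs_mul, abs_of_pos hC, mul_right_comm]
    gcongr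
    exacts [hfar' x hx, hlb x hx]
  have hφ₀ : ∀ x ∈ Icc a b, C * (x - x₀) * g x ≠ 0 := fun x hx =>
    abs_pos.1 ((by positivity : 0 < C * A * δ).trans_le (hφ x hx))
  have hgc : ContinuousOn g (Icc a b) := fun x hx => (hg x hx).continuousWithinAt
  have hψ : ContinuousOn (fun x => C * g x + C * (x - x₀) * g' x) (Icc a b) := by fun_prop
  refine (norm_integral_fourierChar_le hab hf (fun x hx => ?_) hψ hφ₀).trans ?_
  · exact ((((hasDerivWithinAt_id x _).sub_const x₀).const_mul C).mul (hg x hx)).congr_deriv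
      (by simp only [id]; ring)
  have hinvsq : IntervalIntegrable (fun x => ((x - x₀) ^ 2)⁻¹) volume a b := by
    refine ContinuousOn.intervalIntegrable_of_Icc hab <| ContinuousOn.inv₀ (by fun_prop) ?_
    exact fun x hx => pow_ne_zero 2 (abs_pos.1 (hδ.trans_le (hfar' x hx)))
  have hint : ∫ x in a..b, |C * g x + C * (x - x₀) * g' x| / (C * (x - x₀) * g x) ^ 2 ≤
      (C * A)⁻¹ * δ⁻¹ + (b - a) * (B / (C * A ^ 2 * δ)) := calc
    _ ≤ ∫ x in a..b, ((C * A)⁻¹ * ((x - x₀) ^ 2)⁻¹ + B / (C * A ^ 2 * δ)) := by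
        refine integral_mono_on hab ?_ ?_ fun x hx =>
          abs_div_sq_le_of_abs_le hC hA hδ (hfar' x hx) (hlb x hx) (hub x hx)
        · refine ContinuousOn.intervalIntegrable_of_Icc hab <| hψ.norm.div (by fun_prop) ?_
          exact fun x hx => pow_ne_zero 2 (hφ₀ x hx)
        · exact hinvsq.const_mul _ |>.add intervalIntegrable_const
    _ = (C * A)⁻¹ * (∫ x in a..b, ((x - x₀) ^ 2)⁻¹) + (b - a) * (B / (C * A ^ 2 * δ)) := by
        rw [intervalIntegral.integral_add (hinvsq.const_mul _) intervalIntegrable_const,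
          intervalIntegral.integral_const_mul, intervalIntegral.integral_const, smul_eq_mul]
    _ ≤ (C * A)⁻¹ * δ⁻¹ + (b - a) * (B / (C * A ^ 2 * δ)) := by
        grw [integral_inv_sub_sq_le hab hδ hfar']
  have hend : ∀ x ∈ Icc a b, |C * (x - x₀) * g x|⁻¹ ≤ (C * A * δ)⁻¹ := fun x hx =>
    inv_anti₀ (by positivity) (hφ x hx)
  grw [hint, hend a ⟨le_rfl, hab⟩, hend b ⟨hab, le_rfl⟩]
  field_simp
  linarith

theorem norm_integral_zero_one_le_of_far {u : ℝ → ℂ} {x₀ δ K M : ℝ} (hδ : 0 ≤ δ)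
    (hu : IntervalIntegrable u volume 0 1) (hK : ∀ x ∈ Icc (0 : ℝ) 1, ‖u x‖ ≤ K)
    (hfar : ∀ a b : ℝ, 0 ≤ a → a ≤ b → b ≤ 1 → (∀ x ∈ Ioo a b, δ ≤ |x - x₀|) →
      ‖∫ x in a..b, u x‖ ≤ M) :
    ‖∫ x in (0 : ℝ)..1, u x‖ ≤ 2 * M + 2 * δ * K := by
  have h0 : (0 : ℝ) ∈ Icc (0 : ℝ) 1 := ⟨le_rfl, zero_le_one⟩
  have h1 : (1 : ℝ) ∈ Icc (0 : ℝ) 1 := ⟨zero_le_one, le_rfl⟩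
  set p := min 1 (max 0 (x₀ - δ))
  set q := min 1 (max 0 (x₀ + δ))
  have hp : p ∈ Icc (0 : ℝ) 1 := ⟨le_min zero_le_one (le_max_left _ _), min_le_left _ _⟩
  have hq : q ∈ Icc (0 : ℝ) 1 := ⟨le_min zero_le_one (le_max_left _ _), min_le_left _ _⟩
  have hpq : p ≤ q := min_le_min le_rfl (max_le_max le_rfl (by linarith))
  have hqp : q - p ≤ 2 * δ := calc
    q - p ≤ |(x₀ + δ) - (x₀ - δ)| :=
      (le_abs_self _).trans <| (abs_min_sub_min_le_max _ _ _ _).trans <| by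
        simpa using abs_max_sub_max_le_max 0 (x₀ + δ) 0 (x₀ - δ)
    _ = 2 * δ := by rw [abs_of_nonneg (by linarith)]; ring
  have hint : ∀ a ∈ Icc (0 : ℝ) 1, ∀ b ∈ Icc (0 : ℝ) 1, IntervalIntegrable u volume a b :=
    fun a ha b hb => hu.mono_set (by rw [uIcc_of_le zero_le_one]; exact uIcc_subset_Icc ha hb)
  have hleft : ‖∫ x in (0 : ℝ)..p, u x‖ ≤ M := hfar 0 p le_rfl hp.1 hp.2 fun x hx => by
    rcases lt_max_iff.1 (hx.2.trans_le (min_le_right _ _)) with h | h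
    · linarith [hx.1]
    · rw [abs_sub_comm]
      exact le_abs.2 (Or.inl (by linarith))
  have hright : ‖∫ x in q..1, u x‖ ≤ M := hfar q 1 hq.1 hq.2 le_rfl fun x hx => by
    rcases min_lt_iff.1 hx.1 with h | h
    · linarith [hx.2]
    · exact le_abs.2 (Or.inl (by linarith [(max_lt_iff.1 h).2]))
  have hmid : ‖∫ x in p..q, u x‖ ≤ 2 * δ * K := by
    have hK₀ : 0 ≤ K := (norm_nonneg _).trans (hK 0 h0)
    calc ‖∫ x in p..q, u x‖ ≤ K * |q - p| := norm_integral_le_of_norm_le_const fun x hx => by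
          rw [uIoc_of_le hpq] at hx
          exact hK x ⟨hp.1.trans hx.1.le, hx.2.trans hq.2⟩
      _ ≤ 2 * δ * K := by rw [abs_of_nonneg (sub_nonneg.2 hpq), mul_comm]; gcongr
  rw [← integral_add_adjacent_intervals (hint 0 h0 p hp) (hint p hp 1 h1),
    ← integral_add_adjacent_intervals (hint p hp q hq) (hint q hq 1 h1)]
  grw [norm_add_le, norm_add_le, hleft, hmid, hright]
  linarith

theorem sq_rpow_three_halves_mul_rpow_half {A C : ℝ} (hA : 0 < A) (hC : 0 < C) :
    (A ^ ((3 : ℝ) / 2) * C ^ ((1 : ℝ) / 2)) ^ 2 = A ^ 3 * C := by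
  rw [mul_pow, ← rpow_natCast, ← rpow_natCast, ← rpow_mul hA.le, ← rpow_mul hC.le]
  norm_num

theorem far_bound_le_two_mul {A B C δ L : ℝ} (hA : 0 < A) (hBA : A ≤ B) (hC : 0 < C) (hδ : 0 < δ)
    (hδsq : C * A ^ 3 * δ ^ 2 = B ^ 2) (hL : L ≤ 1) :
    (3 / (C * A * δ) + B * L / (C * A ^ 2 * δ)) / (2 * π) ≤ 2 * δ := by
  have hB : 0 < B := hA.trans_le hBA
  have h₁ : 1 ≤ C * A * δ ^ 2 := by
    have e : A ^ 2 * (C * A * δ ^ 2) = B ^ 2 := by rw [← hδsq]; ring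
    refine le_of_mul_le_mul_left ?_ (by positivity : 0 < A ^ 2)
    rw [mul_one, e]
    exact pow_le_pow_left₀ hA.le hBA 2
  have h₂ : B ≤ C * A ^ 2 * δ ^ 2 := by
    have e : A * (C * A ^ 2 * δ ^ 2) = B ^ 2 := by rw [← hδsq]; ring
    refine le_of_mul_le_mul_left ?_ hA
    rw [e, sq]
    exact mul_le_mul_of_nonneg_right hBA hB.le
  have h₁' : 3 / (C * A * δ) ≤ 3 * δ := by
    rw [div_le_iff₀ (by positivity)]; nlinarith
  have h₂' : B * L / (C * A ^ 2 * δ) ≤ δ := by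
    rw [div_le_iff₀ (by positivity)]; nlinarith
  rw [div_le_iff₀ (by positivity)]
  nlinarith [pi_gt_three]

/-- Van der Corput-type inequality (Kaufman) for phases with a possible stationary
point: if `f` is C² on [0,1] with `f'(x) = (C₁x + C₂)·g(x)`, where `|g| ≥ A`,
`|g'| ≤ B` and `B ≥ A > 0`, `C₁ > 0`, then `|∫₀¹ e(f(x)) dx| ≤ 6B/(A^{3/2}·C₁^{1/2})`. -/
theorem van_der_corput_stationary
    (f f' g g' : ℝ → ℝ) (A B C₁ C₂ : ℝ) (hA : 0 < A) (hBA : A ≤ B) (hC₁ : 0 < C₁)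
    (hf' : ∀ x ∈ Set.Icc (0:ℝ) 1, HasDerivWithinAt f (f' x) (Set.Icc 0 1) x)
    (hfactor : ∀ x ∈ Set.Icc (0:ℝ) 1, f' x = (C₁ * x + C₂) * g x)
    (hg' : ∀ x ∈ Set.Icc (0:ℝ) 1, HasDerivWithinAt g (g' x) (Set.Icc 0 1) x)
    (hcont : ContinuousOn g' (Set.Icc (0:ℝ) 1))
    (hlb : ∀ x ∈ Set.Icc (0:ℝ) 1, A ≤ |g x|)
    (hub : ∀ x ∈ Set.Icc (0:ℝ) 1, |g' x| ≤ B) :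
    ‖∫ x in (0:ℝ)..1,
        Complex.exp ((((2 * Real.pi * f x) : ℝ) : ℂ) * Complex.I)‖ ≤
      6 * B / (A ^ ((3:ℝ)/2) * C₁ ^ ((1:ℝ)/2)) := by
  set x₀ := -C₂ / C₁ with hx₀
  set δ := B / (A ^ ((3 : ℝ) / 2) * C₁ ^ ((1 : ℝ) / 2)) with hδ_def
  have hδ : 0 < δ := by have := hA.trans_le hBA; positivity
  have hδsq : C₁ * A ^ 3 * δ ^ 2 = B ^ 2 := by
    rw [hδ_def, div_pow, sq_rpow_three_halves_mul_rpow_half hA hC₁]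
    field_simp
  have hfar : ∀ a b : ℝ, 0 ≤ a → a ≤ b → b ≤ 1 → (∀ x ∈ Ioo a b, δ ≤ |x - x₀|) →
      ‖∫ x in a..b, (𝐞 (f x) : ℂ)‖ ≤ 2 * δ := by
    intro a b ha hab hb hfar
    have hs : Icc a b ⊆ Icc 0 1 := Icc_subset_Icc ha hb
    have hf : ∀ x ∈ Icc a b, HasDerivWithinAt f (C₁ * (x - x₀) * g x) (Icc a b) x :=
      fun x hx => ((hf' x (hs hx)).mono hs).congr_deriv <| by
        rw [hfactor x (hs hx), hx₀]
        field_simp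
        ring
    exact (norm_integral_fourierChar_le_of_far hA hC₁ hδ hab hf
      (fun x hx => (hg' x (hs hx)).mono hs) (hcont.mono hs) (fun x hx => hlb x (hs hx))
      (fun x hx => hub x (hs hx)) hfar).trans
      (far_bound_le_two_mul hA hBA hC₁ hδ hδsq (by linarith))
  have hfc : ContinuousOn f (Icc 0 1) := fun x hx => (hf' x hx).continuousWithinAt
  have hint : IntervalIntegrable (fun x => (𝐞 (f x) : ℂ)) volume 0 1 :=
    ContinuousOn.intervalIntegrable_of_Icc zero_le_one (by fun_prop)
  calc _ ≤ 2 * (2 * δ) + 2 * δ * 1 := norm_integral_zero_one_le_of_far hδ.le hint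
        (fun x _ => (Circle.norm_coe _).le) hfar
    _ = 6 * B / (A ^ ((3 : ℝ) / 2) * C₁ ^ ((1 : ℝ) / 2)) := by ring
end

section
/- Let F be a complex-valued C¹ function on [0,1] satisfying |F(x)| ≤ 1 and |F′(x)| ≤ M for all x ∈ [0,1], where M > 0, and set m₂ = ∫₀¹ |F(x)|² dx. Let μ be a Borel probability measure on [0,1], and let Λ(h) = sup_{t ∈ ℝ} μ([t, t+h]) for h > 0. Then for all r > 0, ∫₀¹ |F(x)| dμ(x) ≤ 2r + Λ(r/M)·(1 + m₂M/r³). -/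
/-!
Away from `E = {x ∈ [0,1] | 2r ≤ |F x|}` the integrand is below `2r`, and `|F| ≤ 1` on `E`, so
`∫ |F| dμ ≤ 2r + μ(E)`. Cover `E` by the grid cells `[kh, kh + h)`, `h = r/M`, that meet it; each
has `μ`-mass at most `Λ(h)`. Since `|F'| ≤ M`, `|F| ≥ 2r - Mh = r` on every such cell, so each of
them lying inside `[0,1]` carries at least `r²h = r³/M` of `m₂ = ∫₀¹ |F|²`. Hence there are at most
`m₂M/r³` of those, plus possibly the last cell, which sticks out of `[0,1]`.
-/

open MeasureTheory intervalIntegral Set Function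
open scoped Finset

section

variable {α ι : Type*} [MeasurableSpace α] {μ : Measure α}

theorem measureReal_le_card_mul_of_subset_biUnion [IsFiniteMeasure μ] {E : Set α} {S : Finset ι}
    {U : ι → Set α} {Λ : ℝ} (hE : E ⊆ ⋃ i ∈ S, U i) (hU : ∀ i ∈ S, μ.real (U i) ≤ Λ) :
    μ.real E ≤ #S * Λ :=
  calc μ.real E ≤ μ.real (⋃ i ∈ S, U i) := measureReal_mono hE (measure_ne_top _ _)
    _ ≤ ∑ i ∈ S, μ.real (U i) := measureReal_biUnion_finset_le S U
    _ ≤ #S * Λ := by simpa using Finset.sum_le_card_nsmul S _ Λ hU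

theorem card_mul_le_setIntegral_of_pairwiseDisjoint {S : Finset ι} {U : ι → Set α} {s : Set α}
    {g : α → ℝ} {c : ℝ} (hU : ∀ i ∈ S, MeasurableSet (U i)) (hdisj : (S : Set ι).PairwiseDisjoint U)
    (hUs : ∀ i ∈ S, U i ⊆ s) (hg : IntegrableOn g s μ) (hg0 : 0 ≤ᵐ[μ.restrict s] g)
    (hc : ∀ i ∈ S, c ≤ ∫ x in U i, g x ∂μ) :
    #S * c ≤ ∫ x in s, g x ∂μ :=
  calc #S * c ≤ ∑ i ∈ S, ∫ x in U i, g x ∂μ := by simpa using Finset.card_nsmul_le_sum S _ c hc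
    _ = ∫ x in ⋃ i ∈ S, U i, g x ∂μ :=
      (integral_biUnion_finset S hU hdisj fun i hi => hg.mono_set (hUs i hi)).symm
    _ ≤ ∫ x in s, g x ∂μ :=
      setIntegral_mono_set hg hg0 (iUnion₂_subset hUs).eventuallyLE

theorem setIntegral_le_add_measureReal_setOf_le [IsProbabilityMeasure μ] {s : Set α} {f : α → ℝ}
    {c : ℝ} (hc : 0 ≤ c) (hs : MeasurableSet s) (hE : MeasurableSet {x ∈ s | c ≤ f x})
    (hf : ∀ x ∈ s, f x ∈ Icc 0 1) :
    ∫ x in s, f x ∂μ ≤ c + μ.real {x ∈ s | c ≤ f x} := by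
  set E := {x ∈ s | c ≤ f x}
  have hle : ∀ x ∈ s, f x ≤ c + E.indicator 1 x := fun x hx => by
    by_cases hxE : x ∈ E
    · rw [indicator_of_mem hxE, Pi.one_apply]
      linarith [(hf x hx).2]
    · simp only [indicator_of_notMem hxE, add_zero]
      exact (not_le.1 fun h => hxE ⟨hx, h⟩).le
  have hind : Integrable (E.indicator (1 : α → ℝ)) (μ.restrict s) := (integrable_const 1).indicator hE
  have hint : Integrable (fun x => c + E.indicator 1 x) (μ.restrict s) :=
    (integrable_const c).add hind
  calc ∫ x in s, f x ∂μ ≤ ∫ x in s, (c + E.indicator 1 x) ∂μ :=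
        integral_mono_of_nonneg ((ae_restrict_mem hs).mono fun x hx => (hf x hx).1) hint
          ((ae_restrict_mem hs).mono hle)
    _ = c * μ.real s + μ.real E := by
        rw [integral_add (integrable_const c) hind,
          setIntegral_const, integral_indicator_one hE, measureReal_restrict_apply hE,
          inter_eq_left.2 (sep_subset s _), smul_eq_mul, mul_comm]
    _ ≤ c + μ.real E := by gcongr; exact mul_le_of_le_one_right hc measureReal_le_one

end

theorem measureReal_Icc_le_iSup (μ : Measure ℝ) [IsFiniteMeasure μ] (h t : ℝ) :
    μ.real (Icc t (t + h)) ≤ ⨆ t : ℝ, (μ (Icc t (t + h))).toReal :=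
  le_ciSup (f := fun t => μ.real (Icc t (t + h))) ⟨μ.real univ, by
    rintro _ ⟨t, rfl⟩; exact measureReal_mono (subset_univ _)⟩ t

def gridCell (h : ℝ) (k : ℕ) : Set ℝ := Ico (k * h) (k * h + h)

namespace gridCell

theorem pairwise_disjoint (h : ℝ) : Pairwise (Disjoint on gridCell h) := by
  intro m n hmn
  have := pairwise_disjoint_Ico_zsmul h (Nat.cast_injective.ne hmn : (m : ℤ) ≠ n)
  simpa [onFun, gridCell, add_one_mul] using this

theorem volume_real (h : ℝ) (hh : 0 ≤ h) (k : ℕ) : volume.real (gridCell h k) = h := by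
  rw [gridCell, Real.volume_real_Ico_of_le (le_add_of_nonneg_right hh)]
  ring

theorem abs_sub_lt {h : ℝ} {k : ℕ} {x y : ℝ} (hx : x ∈ gridCell h k) (hy : y ∈ gridCell h k) :
    |y - x| < h := by
  rw [abs_sub_lt_iff]
  constructor <;> linarith [hx.1, hx.2, hy.1, hy.2]

theorem subset_Icc {h a : ℝ} (hh : 0 < h) {k : ℕ} (hk : k < ⌊a / h⌋₊) :
    gridCell h k ⊆ Icc 0 a := by
  have hka : (k + 1 : ℝ) ≤ a / h := by exact_mod_cast (Nat.le_floor_iff' k.succ_ne_zero).1 hk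
  rw [le_div_iff₀ hh, add_one_mul] at hka
  exact fun x hx => ⟨(by positivity : (0:ℝ) ≤ k * h).trans hx.1, hx.2.le.trans hka⟩

end gridCell

-- The cells with `k < ⌊a / h⌋₊` are exactly those contained in `[0, a]`.
open scoped Classical in
noncomputable def gridCellsMeeting (h a : ℝ) (E : Set ℝ) : Finset ℕ :=
  (Finset.range ⌊a / h⌋₊).filter fun k => (gridCell h k ∩ E).Nonempty

theorem mem_gridCellsMeeting {h a : ℝ} {E : Set ℝ} {k : ℕ} :
    k ∈ gridCellsMeeting h a E ↔ k < ⌊a / h⌋₊ ∧ (gridCell h k ∩ E).Nonempty := by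
  simp [gridCellsMeeting]

theorem subset_biUnion_gridCellsMeeting {h a : ℝ} (hh : 0 < h) {E : Set ℝ} (hE : E ⊆ Icc 0 a) :
    E ⊆ ⋃ k ∈ insert ⌊a / h⌋₊ (gridCellsMeeting h a E), gridCell h k := by
  intro x hx
  have hx0 : 0 ≤ x / h := div_nonneg (hE hx).1 hh.le
  have hxk : x ∈ gridCell h ⌊x / h⌋₊ := by
    constructor
    · rw [← le_div_iff₀ hh]; exact Nat.floor_le hx0
    · rw [← add_one_mul, ← div_lt_iff₀ hh]; exact Nat.lt_floor_add_one _
  have hka : ⌊x / h⌋₊ ≤ ⌊a / h⌋₊ := Nat.floor_le_floor (by gcongr; exact (hE hx).2)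
  refine Set.mem_biUnion ?_ hxk
  rcases hka.lt_or_eq with hlt | heq
  · exact Finset.mem_insert_of_mem (mem_gridCellsMeeting.2 ⟨hlt, x, hxk, hx⟩)
  · exact heq ▸ Finset.mem_insert_self _ _

theorem measureReal_le_card_gridCellsMeeting_add_one_mul (μ : Measure ℝ) [IsFiniteMeasure μ]
    {h a : ℝ} (hh : 0 < h) {E : Set ℝ} (hE : E ⊆ Icc 0 a) :
    μ.real E ≤ (#(gridCellsMeeting h a E) + 1) * ⨆ t : ℝ, (μ (Icc t (t + h))).toReal := calc
  μ.real E ≤ #(insert ⌊a / h⌋₊ (gridCellsMeeting h a E)) * ⨆ t : ℝ, (μ (Icc t (t + h))).toReal :=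
    measureReal_le_card_mul_of_subset_biUnion (subset_biUnion_gridCellsMeeting hh hE)
      fun k _ => (measureReal_mono Ico_subset_Icc_self).trans (measureReal_Icc_le_iSup μ h _)
  _ ≤ _ := by
    have hΛ := measureReal_nonneg.trans (measureReal_Icc_le_iSup μ h 0)
    gcongr
    exact_mod_cast Finset.card_insert_le _ _

section

variable {V : Type*} [NormedAddCommGroup V] [NormedSpace ℝ V] {f f' : ℝ → V} {a M h r : ℝ}

theorem sq_mul_le_setIntegral_sq_norm_gridCell
    (hf : ∀ x ∈ Icc 0 a, HasDerivWithinAt f (f' x) (Icc 0 a) x)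
    (hf' : ∀ x ∈ Icc 0 a, ‖f' x‖ ≤ M) (hM : 0 ≤ M) (hh : 0 < h) (hr : 0 ≤ r) {k : ℕ}
    (hk : k < ⌊a / h⌋₊) {x : ℝ} (hx : x ∈ gridCell h k) (hfx : M * h + r ≤ ‖f x‖) :
    r ^ 2 * h ≤ ∫ y in gridCell h k, ‖f y‖ ^ 2 := by
  have hcell := gridCell.subset_Icc hh hk
  have hfc : ContinuousOn f (Icc 0 a) := fun x hx => (hf x hx).continuousWithinAt
  have hr_le : ∀ y ∈ gridCell h k, r ^ 2 ≤ ‖f y‖ ^ 2 := fun y hy => by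
    have hlip : ‖f y - f x‖ ≤ M * ‖y - x‖ :=
      (convex_Icc 0 a).norm_image_sub_le_of_norm_hasDerivWithin_le hf hf' (hcell hx) (hcell hy)
    have hyx : M * |y - x| ≤ M * h := by gcongr; exact (gridCell.abs_sub_lt hx hy).le
    rw [Real.norm_eq_abs] at hlip
    gcongr
    linarith [norm_sub_norm_le (f x) (f y), norm_sub_rev (f x) (f y)]
  calc r ^ 2 * h = r ^ 2 * volume.real (gridCell h k) := by rw [gridCell.volume_real h hh.le]
    _ ≤ ∫ y in gridCell h k, ‖f y‖ ^ 2 :=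
      setIntegral_ge_of_const_le_real measurableSet_Ico measure_Ico_lt_top.ne hr_le
        ((hfc.norm.pow 2).integrableOn_Icc.mono_set hcell)

theorem card_gridCellsMeeting_mul_le_setIntegral_sq_norm
    (hf : ∀ x ∈ Icc 0 a, HasDerivWithinAt f (f' x) (Icc 0 a) x)
    (hf' : ∀ x ∈ Icc 0 a, ‖f' x‖ ≤ M) (hM : 0 ≤ M) (hh : 0 < h) (hr : 0 ≤ r) :
    #(gridCellsMeeting h a {x ∈ Icc 0 a | M * h + r ≤ ‖f x‖}) * (r ^ 2 * h) ≤
      ∫ x in Icc 0 a, ‖f x‖ ^ 2 := by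
  have hfc : ContinuousOn f (Icc 0 a) := fun x hx => (hf x hx).continuousWithinAt
  refine card_mul_le_setIntegral_of_pairwiseDisjoint (fun _ _ => measurableSet_Ico)
    ((gridCell.pairwise_disjoint h).set_pairwise _)
    (fun k hk => gridCell.subset_Icc hh (mem_gridCellsMeeting.1 hk).1)
    (hfc.norm.pow 2).integrableOn_Icc (ae_of_all _ fun _ => by positivity) fun k hk => ?_
  obtain ⟨hk, x, hxk, -, hfx⟩ := mem_gridCellsMeeting.1 hk
  exact sq_mul_le_setIntegral_sq_norm_gridCell hf hf' hM hh hr hk hxk hfx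

end

theorem kaufman_comparison_general
    (F F' : ℝ → ℂ) (M : ℝ) (hM : 0 < M)
    (hderiv : ∀ x ∈ Set.Icc (0:ℝ) 1, HasDerivWithinAt F (F' x) (Set.Icc 0 1) x)
    (hF : ∀ x ∈ Set.Icc (0:ℝ) 1, ‖F x‖ ≤ 1)
    (hF' : ∀ x ∈ Set.Icc (0:ℝ) 1, ‖F' x‖ ≤ M)
    (μ : Measure ℝ) [IsProbabilityMeasure μ] :
    ∀ r > (0:ℝ),
      ∫ x in Set.Icc (0:ℝ) 1, ‖F x‖ ∂μ ≤
        2 * r + (⨆ t : ℝ, (μ (Set.Icc t (t + r / M))).toReal) *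
          (1 + (∫ x in (0:ℝ)..1, ‖F x‖ ^ 2) * M / r ^ 3) := by
  intro r hr
  set h := r / M
  have hh : 0 < h := div_pos hr hM
  have hMh : M * h = r := mul_div_cancel₀ r hM.ne'
  set E := {x ∈ Icc (0:ℝ) 1 | M * h + r ≤ ‖F x‖}
  have hFc : ContinuousOn F (Icc 0 1) := fun x hx => (hderiv x hx).continuousWithinAt
  have hE : MeasurableSet E :=
    (hFc.norm.preimage_isClosed_of_isClosed isClosed_Icc isClosed_Ici).measurableSet
  have hbody := setIntegral_le_add_measureReal_setOf_le (μ := μ) (by positivity) measurableSet_Icc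
    hE fun x hx => ⟨norm_nonneg (F x), hF x hx⟩
  have hμE := measureReal_le_card_gridCellsMeeting_add_one_mul μ (E := E) hh (sep_subset _ _)
  have hcard := card_gridCellsMeeting_mul_le_setIntegral_sq_norm hderiv hF' hM.le hh hr.le
  have hΛ := measureReal_nonneg.trans (measureReal_Icc_le_iSup μ h 0)
  rw [integral_of_le zero_le_one, ← integral_Icc_eq_integral_Ioc]
  set G := gridCellsMeeting h 1 E
  set Λ := ⨆ t : ℝ, (μ (Icc t (t + h))).toReal
  set m₂ := ∫ x in Icc (0:ℝ) 1, ‖F x‖ ^ 2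
  have hG : (#G : ℝ) ≤ m₂ * M / r ^ 3 := by
    rw [le_div_iff₀ (by positivity)]
    calc (#G : ℝ) * r ^ 3 = #G * (r ^ 2 * h) * M := by rw [← hMh]; ring
      _ ≤ m₂ * M := by gcongr
  nlinarith

/-- Kaufman's comparison lemma: for a C¹ function `F` on [0,1] with `|F| ≤ 1`,
`|F'| ≤ M`, `m₂ = ∫₀¹|F|²dx`, a Borel probability measure `μ` on [0,1], and
`Λ(h)` the maximal `μ`-measure of an interval of length `h`, one has for all
`r > 0`: `∫₀¹ |F| dμ ≤ 2r + Λ(r/M)(1 + m₂ M / r³)`. -/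
theorem kaufman_comparison
    (F F' : ℝ → ℂ) (M : ℝ) (hM : 0 < M)
    (hderiv : ∀ x ∈ Set.Icc (0:ℝ) 1, HasDerivWithinAt F (F' x) (Set.Icc 0 1) x)
    (hcont : ContinuousOn F' (Set.Icc (0:ℝ) 1))
    (hF : ∀ x ∈ Set.Icc (0:ℝ) 1, ‖F x‖ ≤ 1)
    (hF' : ∀ x ∈ Set.Icc (0:ℝ) 1, ‖F' x‖ ≤ M)
    (μ : Measure ℝ) [IsProbabilityMeasure μ] (hμ : μ (Set.Icc (0:ℝ) 1)ᶜ = 0) :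
    ∀ r > (0:ℝ),
      ∫ x in Set.Icc (0:ℝ) 1, ‖F x‖ ∂μ ≤
        2 * r + (⨆ t : ℝ, (μ (Set.Icc t (t + r / M))).toReal) *
          (1 + (∫ x in (0:ℝ)..1, ‖F x‖ ^ 2) * M / r ^ 3) :=
  kaufman_comparison_general F F' M hM hderiv hF hF' μ
end
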